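/- (Direct part of the constructive characterization.) Assume λ_n → ∞ as n → ∞. Let ω : [0,1] → [0,∞) be a majorant: continuous on [0,1], nondecreasing, ω(δ) > 0 for δ ∈ (0,1], and ω(δ) → 0 as δ → 0+. Let α > 0. If ω_α(A,δ) = O(ω(δ)) as δ → 0+ (i.e. there exist constants C > 0 and δ_0 ∈ (0,1] with ω_α(A,δ) ≤ C ω(δ) for all 0 < δ ≤ δ_0), then E_n(A) = O(ω(1/λ_n)) as n → ∞ (i.e. there exist C' > 0 and n_0 ∈ ℕ with E_n(A) ≤ C' ω(1/λ_n) for all n ≥ n_0). -/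

import Mathlib

open MeasureTheory Real Filter Finset intervalIntegral
open scoped ENNReal Topology

noncomputable section

/-- `M` is an Orlicz function: nondecreasing and convex on `[0,∞)`, `M 0 = 0`,
and `M t → ∞` as `t → ∞`. -/
def IsOrlicz (M : ℝ → ℝ) : Prop :=
  MonotoneOn M (Set.Ici 0) ∧ ConvexOn ℝ (Set.Ici 0) M ∧ M 0 = 0 ∧
    Filter.Tendsto M Filter.atTop Filter.atTop

/-- The Legendre conjugate `M*(v) = sup {uv - M u : u ≥ 0}`, valued in `[0,∞]`. -/
def Mstar (M : ℝ → ℝ) (v : ℝ) : ℝ≥0∞ :=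
  ⨆ (u : ℝ) (_ : 0 ≤ u), ENNReal.ofReal (u * v - M u)

/-- The set `Γ` of positive sequences `γ` with `Σ_k M_k^*(γ_k) ≤ 1`. -/
def GammaSet (M : ℤ → ℝ → ℝ) : Set (ℤ → ℝ) :=
  {γ | (∀ k, 0 < γ k) ∧ ∑' k : ℤ, Mstar (M k) (γ k) ≤ 1}

/-- The Orlicz norm `‖A‖_M = sup_{γ ∈ Γ} Σ_k γ_k |A_k|` of a sequence of
Fourier coefficients, valued in `[0,∞]`. -/
def orliczNorm (M : ℤ → ℝ → ℝ) (A : ℤ → ℂ) : ℝ≥0∞ :=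
  ⨆ γ ∈ GammaSet M, ∑' k : ℤ, ENNReal.ofReal (γ k * ‖A k‖)

/-- The best approximation `E_n(A) = sup_{γ ∈ Γ} Σ_{|k| ≥ n} γ_k |A_k|`. -/
def bestE (M : ℤ → ℝ → ℝ) (A : ℤ → ℂ) (n : ℕ) : ℝ≥0∞ :=
  ⨆ γ ∈ GammaSet M, ∑' k : ℤ,
    if (n : ℤ) ≤ |k| then ENNReal.ofReal (γ k * ‖A k‖) else 0

/-- The generalized modulus of smoothness
`ω_φ(A, δ) = sup_{|h| ≤ δ} sup_{γ ∈ Γ} Σ_k γ_k φ(λ_k h) |A_k|`. -/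
def genMod (Λ : ℤ → ℝ) (M : ℤ → ℝ → ℝ) (A : ℤ → ℂ) (φ : ℝ → ℝ) (δ : ℝ) : ℝ≥0∞ :=
  ⨆ (h : ℝ) (_ : |h| ≤ δ), ⨆ γ ∈ GammaSet M, ∑' k : ℤ,
    ENNReal.ofReal (γ k * φ (Λ k * h) * ‖A k‖)

/-- The class `Φ`: continuous bounded nonnegative even functions vanishing at `0`
whose zero set has Lebesgue measure zero. -/
def IsPhi (φ : ℝ → ℝ) : Prop :=
  Continuous φ ∧ (∃ C, ∀ t, φ t ≤ C) ∧ (∀ t, 0 ≤ φ t) ∧ φ 0 = 0 ∧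
    (∀ t, φ (-t) = φ t) ∧ MeasureTheory.volume {t : ℝ | φ t = 0} = 0

/-- A symmetric sequence of Fourier exponents: `λ_0 = 0`, `λ_{-k} = -λ_k`,
and `0 < λ_k < λ_{k+1}` for `k ≥ 1`. -/
def IsExponents (Λ : ℤ → ℝ) : Prop :=
  Λ 0 = 0 ∧ (∀ k, Λ (-k) = -Λ k) ∧ (∀ k : ℤ, 1 ≤ k → 0 < Λ k) ∧
    (∀ k : ℤ, 1 ≤ k → Λ k < Λ (k + 1))

/-- `φ_α(t) = 2^{α/2} (1 - cos t)^{α/2}`, so that `ω_{φ_α} = ω_α`. -/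
def phiAlpha (α : ℝ) (t : ℝ) : ℝ := 2 ^ (α / 2) * (1 - Real.cos t) ^ (α / 2)

/-- `sinc t = sin t / t` for `t ≠ 0`, `sinc 0 = 1`. -/
def sincFn (t : ℝ) : ℝ := if t = 0 then 1 else Real.sin t / t

/-- `φ̃_m(t) = (1 - sinc t)^m`, so that `ω_{φ̃_m} = ω̃_m`. -/
def phiTilde (m : ℕ) (t : ℝ) : ℝ := (1 - sincFn t) ^ m

/-! For `|k| ≥ n` and `δ = 1 / λ_n` we have `|λ_k| δ ≥ 1`, and since `φ_α` is even, `2π`-periodic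
and not identically zero, the mean of `h ↦ φ_α(λ_k h)` over `(0, δ]` is at least a constant
`c > 0` independent of `k` and `n`. Averaging over `h ∈ (0, δ]` therefore gives, for every `γ ∈ Γ`,
`c Σ_{|k| ≥ n} γ_k |A_k| ≤ δ⁻¹ ∫_0^δ Σ_k γ_k φ_α(λ_k h) |A_k| dh ≤ ω_α(A, δ)`,
that is `E_n(A) ≤ ω_α(A, 1/λ_n) / c`. -/

theorem IsExponents.strictMono {Λ : ℤ → ℝ} (hΛ : IsExponents Λ) : StrictMono Λ := by
  obtain ⟨h0, hodd, hpos, hsucc⟩ := hΛ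
  have hnonneg : ∀ k : ℤ, 0 ≤ k → Λ k < Λ (k + 1) := by
    intro k hk
    rcases hk.eq_or_lt with rfl | hk
    · simpa [h0] using hpos 1 le_rfl
    · exact hsucc k hk
  refine strictMono_int_of_lt_succ fun k => ?_
  rcases le_or_gt 0 k with hk | hk
  · exact hnonneg k hk
  · have := hnonneg (-(k + 1)) (by omega)
    rw [show -(k + 1) + 1 = -k by ring, hodd, hodd] at this
    linarith

theorem IsExponents.apply_abs {Λ : ℤ → ℝ} (hΛ : IsExponents Λ) (k : ℤ) : Λ |k| = |Λ k| := by
  have hmono := hΛ.strictMono.monotone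
  rcases le_or_gt 0 k with hk | hk
  · have : Λ 0 ≤ Λ k := hmono hk
    rw [abs_of_nonneg hk, abs_of_nonneg (hΛ.1 ▸ this)]
  · have : Λ k ≤ Λ 0 := hmono hk.le
    rw [abs_of_neg hk, abs_of_nonpos (hΛ.1 ▸ this), hΛ.2.1]

theorem Function.Periodic.div_mul_le_integral {f : ℝ → ℝ} {T a S : ℝ}
    (hf : Function.Periodic f T) (hT : 0 < T) (hfi : ∀ x y, IntervalIntegrable f volume x y)
    (hf0 : ∀ t, 0 ≤ f t) (ha : 0 ≤ a) (haT : a ≤ T) (haS : a ≤ S) :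
    (∫ t in 0..a, f t) / (2 * T) * S ≤ ∫ t in 0..S, f t := by
  have hmono : ∀ x y, 0 ≤ x → x ≤ y → ∫ t in 0..x, f t ≤ ∫ t in 0..y, f t := fun x y hx hxy =>
    integral_mono_interval le_rfl hx hxy (Eventually.of_forall hf0) (hfi 0 y)
  set n : ℤ := ⌊S / T⌋
  have hn : (0 : ℝ) ≤ n := by
    exact_mod_cast Int.floor_nonneg.mpr (div_nonneg (ha.trans haS) hT.le)
  have hnS : n * T ≤ S := (le_div_iff₀ hT).mp (Int.floor_le _)
  have hSn : S < (n + 1) * T := (div_lt_iff₀ hT).mp (Int.lt_floor_add_one _)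
  have hperiods : ∫ t in 0..n * T, f t = n * ∫ t in 0..T, f t := by
    simpa [zsmul_eq_mul] using hf.intervalIntegral_add_zsmul_eq n 0 hfi
  have hI0 : 0 ≤ ∫ t in 0..a, f t := intervalIntegral.integral_nonneg ha fun t _ => hf0 t
  have hIT := hmono a T ha haT
  have hIS := hmono a S ha haS
  have hnTS := hmono (n * T) S (by positivity) hnS
  set I := ∫ t in 0..a, f t
  set J := ∫ t in 0..T, f t
  set F := ∫ t in 0..S, f t
  rw [div_mul_eq_mul_div, div_le_iff₀ (by positivity)]
  calc I * S ≤ I * ((n + 1) * T) := mul_le_mul_of_nonneg_left hSn.le hI0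
    _ = (n * I + I) * T := by ring
    _ ≤ (n * J + F) * T := by gcongr
    _ ≤ F * (2 * T) := by nlinarith

theorem phiAlpha_nonneg (α t : ℝ) : 0 ≤ phiAlpha α t :=
  mul_nonneg (by positivity) (Real.rpow_nonneg (by linarith [Real.cos_le_one t]) _)

theorem phiAlpha_neg (α t : ℝ) : phiAlpha α (-t) = phiAlpha α t := by
  simp [phiAlpha]

theorem phiAlpha_periodic (α : ℝ) : Function.Periodic (phiAlpha α) (2 * π) := by
  intro t
  simp [phiAlpha]

theorem phiAlpha_continuous {α : ℝ} (hα : 0 < α) : Continuous (phiAlpha α) :=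
  continuous_const.mul ((continuous_const.sub Real.continuous_cos).rpow_const
    fun _ => Or.inr (by positivity))

theorem integral_phiAlpha_pos {α : ℝ} (hα : 0 < α) : 0 < ∫ t in 0..1, phiAlpha α t := by
  refine intervalIntegral.intervalIntegral_pos_of_pos_on
    ((phiAlpha_continuous hα).intervalIntegrable 0 1) (fun t ht => ?_) one_pos
  have hcos : Real.cos t < 1 := by
    have := Real.strictAntiOn_cos (Set.left_mem_Icc.mpr Real.pi_pos.le)
      ⟨ht.1.le, by linarith [ht.2, Real.pi_gt_three]⟩ ht.1
    rwa [Real.cos_zero] at this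
  exact mul_pos (by positivity) (Real.rpow_pos_of_pos (by linarith) _)

theorem exists_pos_mul_le_integral_phiAlpha {α : ℝ} (hα : 0 < α) :
    ∃ c > 0, ∀ S, 1 ≤ S → c * S ≤ ∫ t in 0..S, phiAlpha α t :=
  ⟨_, div_pos (integral_phiAlpha_pos hα) (by positivity), fun _ hS =>
    (phiAlpha_periodic α).div_mul_le_integral (by positivity)
      (phiAlpha_continuous hα).intervalIntegrable (phiAlpha_nonneg α) zero_le_one
      (by linarith [Real.pi_gt_three]) hS⟩

theorem mul_le_integral_comp_mul_of_even {f : ℝ → ℝ} (heven : ∀ t, f (-t) = f t) {c l δ : ℝ}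
    (hc : ∀ S, 1 ≤ S → c * S ≤ ∫ t in 0..S, f t) (hl : 1 ≤ |l| * δ) :
    c * δ ≤ ∫ t in 0..δ, f (l * t) := by
  have hl0 : 0 < |l| := by
    by_contra! h
    rw [le_antisymm h (abs_nonneg l)] at hl
    norm_num at hl
  have habs : ∀ t, f (l * t) = f (|l| * t) := fun t => by
    rcases abs_choice l with h | h <;> simp [h, heven]
  simp_rw [habs]
  rw [intervalIntegral.integral_comp_mul_left _ hl0.ne', mul_zero, smul_eq_mul,
    le_inv_mul_iff₀ hl0]
  linarith [hc _ hl]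

theorem ofReal_mul_intervalIntegral_eq_setLIntegral {f : ℝ → ℝ} {a b δ : ℝ}
    (hf : Continuous f) (hf0 : ∀ t, 0 ≤ f t) (ha : 0 ≤ a) (hb : 0 ≤ b) (hδ : 0 ≤ δ) :
    ENNReal.ofReal (a * b) * ENNReal.ofReal (∫ t in 0..δ, f t) =
      ∫⁻ t in Set.Ioc 0 δ, ENNReal.ofReal (a * f t * b) := by
  rw [intervalIntegral.integral_of_le hδ, ofReal_integral_eq_lintegral_ofReal
    (hf.intervalIntegrable 0 δ).1 (Eventually.of_forall hf0),
    ← lintegral_const_mul' _ _ ENNReal.ofReal_ne_top]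
  congr 1 with t
  rw [← ENNReal.ofReal_mul (mul_nonneg ha hb)]
  ring_nf

theorem bestE_mul_le_genMod {Λ : ℤ → ℝ} {M : ℤ → ℝ → ℝ} {A : ℤ → ℂ} {φ : ℝ → ℝ} {n : ℕ}
    {c δ : ℝ} (hφc : Continuous φ) (hφ0 : ∀ t, 0 ≤ φ t) (hδ : 0 < δ)
    (hφ : ∀ k : ℤ, (n : ℤ) ≤ |k| → c * δ ≤ ∫ t in 0..δ, φ (Λ k * t)) :
    bestE M A n * ENNReal.ofReal c ≤ genMod Λ M A φ δ := by
  rw [bestE, ENNReal.iSup_mul]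
  refine iSup_le fun γ => ?_
  rw [ENNReal.iSup_mul]
  refine iSup_le fun hγ => ?_
  have hterm : ∀ k : ℤ, (if (n : ℤ) ≤ |k| then ENNReal.ofReal (γ k * ‖A k‖) else 0) *
      ENNReal.ofReal (c * δ) ≤ ∫⁻ t in Set.Ioc 0 δ, ENNReal.ofReal (γ k * φ (Λ k * t) * ‖A k‖) := by
    intro k
    split_ifs with hk
    · refine le_of_le_of_eq ?_ (ofReal_mul_intervalIntegral_eq_setLIntegral
        (hφc.comp (continuous_const_mul (Λ k))) (fun t => hφ0 _) (hγ.1 k).le (norm_nonneg _) hδ.le)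
      gcongr
      exact hφ k hk
    · simp
  rw [← ENNReal.mul_le_mul_iff_left (c := ENNReal.ofReal δ) (by simpa using hδ)
    ENNReal.ofReal_ne_top, mul_assoc, ← ENNReal.ofReal_mul' hδ.le, ← ENNReal.tsum_mul_right]
  calc ∑' k : ℤ, (if (n : ℤ) ≤ |k| then ENNReal.ofReal (γ k * ‖A k‖) else 0) *
        ENNReal.ofReal (c * δ)
      ≤ ∑' k : ℤ, ∫⁻ t in Set.Ioc 0 δ, ENNReal.ofReal (γ k * φ (Λ k * t) * ‖A k‖) :=
        ENNReal.tsum_le_tsum hterm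
    _ = ∫⁻ t in Set.Ioc 0 δ, ∑' k : ℤ, ENNReal.ofReal (γ k * φ (Λ k * t) * ‖A k‖) :=
        (lintegral_tsum fun k => by fun_prop).symm
    _ ≤ ∫⁻ _ in Set.Ioc 0 δ, genMod Λ M A φ δ := by
        refine setLIntegral_mono' measurableSet_Ioc fun t ht => ?_
        have hts : |t| ≤ δ := by rw [abs_of_pos ht.1]; exact ht.2
        exact le_iSup₂_of_le t hts (le_iSup₂_of_le γ hγ le_rfl)
    _ = genMod Λ M A φ δ * ENNReal.ofReal δ := by simp

theorem constructive_characterization_direct_general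
    (Λ : ℤ → ℝ) (M : ℤ → ℝ → ℝ) (A : ℤ → ℂ)
    (hΛ : IsExponents Λ)
    (hΛtop : Filter.Tendsto (fun n : ℕ => Λ n) Filter.atTop Filter.atTop)
    (ω : ℝ → ℝ)
    (α : ℝ) (hα : 0 < α)
    (hO : ∃ C > (0 : ℝ), ∃ δ₀ ∈ Set.Ioc (0 : ℝ) 1, ∀ δ : ℝ, 0 < δ → δ ≤ δ₀ →
      genMod Λ M A (phiAlpha α) δ ≤ ENNReal.ofReal (C * ω δ)) :
    ∃ C' > (0 : ℝ), ∃ n₀ : ℕ, ∀ n : ℕ, n₀ ≤ n →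
      bestE M A n ≤ ENNReal.ofReal (C' * ω (1 / Λ n)) := by
  obtain ⟨C, hC, δ₀, hδ₀, hO⟩ := hO
  obtain ⟨c, hc, hcS⟩ := exists_pos_mul_le_integral_phiAlpha hα
  obtain ⟨n₀, hn₀⟩ := eventually_atTop.mp (hΛtop.eventually_ge_atTop (1 / δ₀))
  refine ⟨C / c, div_pos hC hc, max n₀ 1, fun n hn => ?_⟩
  have hΛn : 0 < Λ n := hΛ.2.2.1 n (by omega)
  have hδδ₀ : 1 / Λ n ≤ δ₀ := (one_div_le hδ₀.1 hΛn).mp (hn₀ n (le_of_max_le_left hn))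
  have hsmooth : bestE M A n * ENNReal.ofReal c ≤ genMod Λ M A (phiAlpha α) (1 / Λ n) := by
    refine bestE_mul_le_genMod (phiAlpha_continuous hα) (phiAlpha_nonneg α) (by positivity)
      fun k hk => mul_le_integral_comp_mul_of_even (phiAlpha_neg α) hcS ?_
    rw [← hΛ.apply_abs, mul_one_div, one_le_div hΛn]
    exact hΛ.strictMono.monotone hk
  calc bestE M A n ≤ ENNReal.ofReal (C * ω (1 / Λ n)) / ENNReal.ofReal c :=
        ENNReal.le_div_iff_mul_le (.inl (by simpa using hc)) (.inl ENNReal.ofReal_ne_top) |>.mpr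
          (hsmooth.trans (hO _ (by positivity) hδδ₀))
    _ = ENNReal.ofReal (C / c * ω (1 / Λ n)) := by
        rw [← ENNReal.ofReal_div_of_pos hc, div_mul_eq_mul_div]

/-- **Direct part of the constructive characterization.** If `ω` is a majorant and
`ω_α(A,δ) = O(ω(δ))` as `δ → 0+`, then `E_n(A) = O(ω(1/λ_n))` as `n → ∞`. -/
theorem constructive_characterization_direct
    (Λ : ℤ → ℝ) (M : ℤ → ℝ → ℝ) (A : ℤ → ℂ)
    (hΛ : IsExponents Λ) (hM : ∀ k, IsOrlicz (M k)) (hA : orliczNorm M A ≠ ⊤)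
    (hΛtop : Filter.Tendsto (fun n : ℕ => Λ n) Filter.atTop Filter.atTop)
    (ω : ℝ → ℝ) (hωc : ContinuousOn ω (Set.Icc 0 1))
    (hωm : MonotoneOn ω (Set.Icc 0 1))
    (hωpos : ∀ δ ∈ Set.Ioc (0 : ℝ) 1, 0 < ω δ)
    (hω0 : Filter.Tendsto ω (nhdsWithin 0 (Set.Ioi 0)) (nhds 0))
    (α : ℝ) (hα : 0 < α)
    (hO : ∃ C > (0 : ℝ), ∃ δ₀ ∈ Set.Ioc (0 : ℝ) 1, ∀ δ : ℝ, 0 < δ → δ ≤ δ₀ →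
      genMod Λ M A (phiAlpha α) δ ≤ ENNReal.ofReal (C * ω δ)) :
    ∃ C' > (0 : ℝ), ∃ n₀ : ℕ, ∀ n : ℕ, n₀ ≤ n →
      bestE M A n ≤ ENNReal.ofReal (C' * ω (1 / Λ n)) :=
  constructive_characterization_direct_general Λ M A hΛ hΛtop ω α hα hO

end
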